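/- Let a, b : ℝ → ℝ be continuous, let t ∈ ℝ and u₀ ∈ ℝ⁶, and define U(τ) = Exp(∫ₜ^{t+τ} a(s) ds, ∫ₜ^{t+τ} b(s) ds)·u₀ for τ ∈ ℝ. Then U is differentiable, U(0) = u₀, and U'(τ) = B(a(t+τ), b(t+τ))·U(τ) for all τ ∈ ℝ; i.e., U is the exact solution of the linear source ODE du/dτ = B(t+τ)u with initial value u₀. -/

import Mathlib

noncomputable section

/-- The source matrix `B(a,b)` of the Ten-Moment body-force source term. -/
def srcB (a b : ℝ) : Matrix (Fin 6) (Fin 6) ℝ :=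
  !![0, 0, 0, 0, 0, 0;
     a, 0, 0, 0, 0, 0;
     b, 0, 0, 0, 0, 0;
     0, a, 0, 0, 0, 0;
     0, b / 2, a / 2, 0, 0, 0;
     0, 0, b, 0, 0, 0]

/-- The explicit exponential matrix of the source operator. -/
def ExpM (a b : ℝ) : Matrix (Fin 6) (Fin 6) ℝ :=
  !![1, 0, 0, 0, 0, 0;
     a, 1, 0, 0, 0, 0;
     b, 0, 1, 0, 0, 0;
     a ^ 2 / 2, a, 0, 1, 0, 0;
     a * b / 2, b / 2, a / 2, 0, 1, 0;
     b ^ 2 / 2, 0, b, 0, 0, 1]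

lemma cons_val_five' {α : Type*} {m : ℕ} (x : α) (u : Fin (m + 5) → α) :
    Matrix.vecCons x u 5 = u 4 := rfl

lemma expM_mulVec (A B : ℝ) (u : Fin 6 → ℝ) :
    (ExpM A B).mulVec u = ![u 0, A * u 0 + u 1, B * u 0 + u 2,
      A ^ 2 / 2 * u 0 + A * u 1 + u 3,
      A * B / 2 * u 0 + B / 2 * u 1 + A / 2 * u 2 + u 4,
      B ^ 2 / 2 * u 0 + B * u 2 + u 5] := by
  funext i
  fin_cases i <;>
    · simp [ExpM, Matrix.mulVec, dotProduct, Fin.sum_univ_six,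
        Matrix.cons_val_two, Matrix.cons_val_three, Matrix.cons_val_four, cons_val_five',
        Matrix.vecHead, Matrix.vecTail]
      try ring

lemma srcB_mulVec (A B : ℝ) (u : Fin 6 → ℝ) :
    (srcB A B).mulVec u = ![0, A * u 0, B * u 0, A * u 1,
      B / 2 * u 1 + A / 2 * u 2, B * u 2] := by
  funext i
  fin_cases i <;>
    · simp [srcB, Matrix.mulVec, dotProduct, Fin.sum_univ_six,
        Matrix.cons_val_two, Matrix.cons_val_three, Matrix.cons_val_four, cons_val_five',
        Matrix.vecHead, Matrix.vecTail]
      try ring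

/-- The map `τ ↦ Exp(∫ₜ^{t+τ} a, ∫ₜ^{t+τ} b)·u₀` is the exact solution of the
linear source ODE `dU/dτ = B(a(t+τ), b(t+τ))·U` with initial value `u₀`. -/
theorem expM_solves_source_ODE (a b : ℝ → ℝ) (ha : Continuous a) (hb : Continuous b)
    (t : ℝ) (u0 : Fin 6 → ℝ) :
    (fun τ : ℝ => (ExpM (∫ s in t..(t + τ), a s) (∫ s in t..(t + τ), b s)).mulVec u0) 0 = u0 ∧
    ∀ τ : ℝ, HasDerivAt
      (fun τ : ℝ => (ExpM (∫ s in t..(t + τ), a s) (∫ s in t..(t + τ), b s)).mulVec u0)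
      ((srcB (a (t + τ)) (b (t + τ))).mulVec
        ((ExpM (∫ s in t..(t + τ), a s) (∫ s in t..(t + τ), b s)).mulVec u0)) τ := by
  constructor
  · simp only [add_zero, intervalIntegral.integral_same, expM_mulVec]
    funext i
    fin_cases i <;> (try norm_num) <;> rfl
  · intro τ
    have hA : HasDerivAt (fun τ : ℝ => ∫ s in t..(t + τ), a s) (a (t + τ)) τ := by
      have h1 := (ha.integral_hasStrictDerivAt t (t + τ)).hasDerivAt
      have h2 : HasDerivAt (fun τ : ℝ => t + τ) 1 τ := (hasDerivAt_id τ).const_add t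
      exact (h1.comp τ h2).congr_deriv (mul_one _)
    have hB : HasDerivAt (fun τ : ℝ => ∫ s in t..(t + τ), b s) (b (t + τ)) τ := by
      have h1 := (hb.integral_hasStrictDerivAt t (t + τ)).hasDerivAt
      have h2 : HasDerivAt (fun τ : ℝ => t + τ) 1 τ := (hasDerivAt_id τ).const_add t
      exact (h1.comp τ h2).congr_deriv (mul_one _)
    set A : ℝ → ℝ := fun τ => ∫ s in t..(t + τ), a s with hAdef
    set B : ℝ → ℝ := fun τ => ∫ s in t..(t + τ), b s with hBdef
    simp only [expM_mulVec, srcB_mulVec]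
    rw [hasDerivAt_pi]
    intro i
    set aτ := a (t + τ)
    set bτ := b (t + τ)
    fin_cases i
    · simpa using (hasDerivAt_const τ (u0 0))
    · -- A τ * u0 0 + u0 1, derivative aτ * u0 0
      have := (hA.mul_const (u0 0)).add_const (u0 1)
      simpa using this
    · have := (hB.mul_const (u0 0)).add_const (u0 2)
      simpa using this
    · -- (A τ)^2/2 * u0 0 + A τ * u0 1 + u0 3
      have h : HasDerivAt (fun τ => (A τ) ^ 2 / 2 * u0 0 + A τ * u0 1 + u0 3)
          (aτ * A τ / 1 * u0 0 + aτ * u0 1) τ := by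
        have h1 : HasDerivAt (fun τ => (A τ) ^ 2 / 2 * u0 0)
            ((2 * A τ ^ 1 * aτ) / 2 * u0 0) τ := ((hA.pow 2).div_const 2).mul_const _
        have h2 : HasDerivAt (fun τ => A τ * u0 1) (aτ * u0 1) τ := hA.mul_const _
        have := (h1.add h2).add_const (u0 3)
        exact this.congr_deriv (by ring)
      have h' := h
      refine h.congr_deriv ?_
      show _ = aτ * (A τ * u0 0 + u0 1)
      ring
    · -- A τ * B τ / 2 * u0 0 + B τ / 2 * u0 1 + A τ / 2 * u0 2 + u0 4
      have h : HasDerivAt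
          (fun τ => A τ * B τ / 2 * u0 0 + B τ / 2 * u0 1 + A τ / 2 * u0 2 + u0 4)
          ((aτ * B τ + A τ * bτ) / 2 * u0 0 + bτ / 2 * u0 1 + aτ / 2 * u0 2) τ := by
        have h1 : HasDerivAt (fun τ => A τ * B τ / 2 * u0 0)
            ((aτ * B τ + A τ * bτ) / 2 * u0 0) τ := (((hA.mul hB).div_const 2).mul_const _)
        have h2 : HasDerivAt (fun τ => B τ / 2 * u0 1) (bτ / 2 * u0 1) τ :=
          (hB.div_const 2).mul_const _
        have h3 : HasDerivAt (fun τ => A τ / 2 * u0 2) (aτ / 2 * u0 2) τ :=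
          (hA.div_const 2).mul_const _
        exact ((h1.add h2).add h3).add_const (u0 4)
      refine h.congr_deriv ?_
      show _ = bτ / 2 * (A τ * u0 0 + u0 1) + aτ / 2 * (B τ * u0 0 + u0 2)
      ring
    · -- B τ ^2/2 * u0 0 + B τ * u0 2 + u0 5
      have h : HasDerivAt (fun τ => (B τ) ^ 2 / 2 * u0 0 + B τ * u0 2 + u0 5)
          ((2 * B τ ^ 1 * bτ) / 2 * u0 0 + bτ * u0 2) τ :=
        (((((hB.pow 2).div_const 2).mul_const _)).add (hB.mul_const _)).add_const (u0 5)
      refine h.congr_deriv ?_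
      show _ = bτ * (B τ * u0 0 + u0 2)
      ring
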